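/- arXiv:2507.15264 — 5 statements merged into one kernel-verified Lean document; each statement's English description precedes it below -/
import Mathlib

section
/- Suppose φ is a Legendre function on an open convex set C ⊆ ℝⁿ, twice continuously differentiable with ∇²φ(x) positive definite on C, and suppose for every ρ > 0, sup{‖∇²φ(x)⁻¹∇φ(x)‖ : x ∈ C, ‖x‖ ≤ ρ} < ∞. Then for every x̄ in the closure of C, the normal cone N_{cl C}(x̄) is contained in the set S = {d : ∃ x_k → x̄ in C, e_k → 0, ∇²φ(x_k)e_k → d}, i.e., every normal direction at x̄ arises as a limit of Hessians applied to vanishing vectors. -/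
open Matrix Filter Topology

noncomputable def gradVec {n : ℕ} (φ : (Fin n → ℝ) → ℝ) (x : Fin n → ℝ) : Fin n → ℝ :=
  fun i => fderiv ℝ φ x (Pi.single i 1)

/-- The Hessian matrix of `φ` at `x`, via the second iterated Fréchet derivative. -/
noncomputable def hessMat {n : ℕ} (φ : (Fin n → ℝ) → ℝ) (x : Fin n → ℝ) :
    Matrix (Fin n) (Fin n) ℝ :=
  fun i j => iteratedFDeriv ℝ 2 φ x ![Pi.single i 1, Pi.single j 1]

/-!
Fix `v` normal to `cl C` at `x̄` and put `u = x̄ + v`. For `t > 0` the equation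
`x + t ∇φ(x) = u` has a solution `x_t ∈ C`: the image of `C` under `x ↦ x + t ∇φ(x)` is open by
the inverse function theorem (its derivative `I + t ∇²φ(x)` is positive definite) and closed,
because monotonicity of `∇φ` makes the map distance-expanding while `‖∇φ‖` blows up at `∂C`.
As `t → 0`, every cluster point `x*` of `x_t` satisfies `⟪u - x*, y - x*⟫ ≤ 0` on `cl C`, and so
does `x̄`; this variational inequality has at most one solution, hence `x_t → x̄`. Finally
`e_t = t ∇²φ(x_t)⁻¹ ∇φ(x_t)` is `O(t)` by the bound on `‖∇²φ⁻¹∇φ‖`, and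
`∇²φ(x_t) e_t = u - x_t → v`.
-/

open scoped RealInnerProductSpace
open Set WithLp

section NormedSpace

variable {E F : Type*} [NormedAddCommGroup E] [NormedSpace ℝ E] [NormedAddCommGroup F]
  [NormedSpace ℝ F]

theorem ConvexOn.le_sub_of_hasFDerivAt {C : Set E} {f : E → ℝ} {f' : E →L[ℝ] ℝ} {x y : E}
    (hf : ConvexOn ℝ C f) (hx : x ∈ C) (hy : y ∈ C) (hf' : HasFDerivAt f f' x) :
    f' (y - x) ≤ f y - f x := by
  set L : ℝ →ᵃ[ℝ] E := AffineMap.lineMap x y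
  have hL : HasDerivAt (fun s : ℝ => L s) (y - x) 0 := by
    simpa [L, AffineMap.lineMap_apply] using
      ((hasDerivAt_id (0 : ℝ)).smul_const (y - x)).add_const x
  have hcomp : HasDerivAt (f ∘ L) (f' (y - x)) 0 :=
    (by simpa [L] using hf' : HasFDerivAt f f' (L 0)).comp_hasDerivAt 0 hL
  simpa [L, slope_def_field] using
    (hf.comp_affineMap L).le_slope_of_hasDerivAt (by simpa [L] using hx) (by simpa [L] using hy)
      zero_lt_one hcomp

theorem ConvexOn.sub_apply_sub_nonneg {C : Set E} {f : E → ℝ} {f'x f'y : E →L[ℝ] ℝ} {x y : E}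
    (hf : ConvexOn ℝ C f) (hx : x ∈ C) (hy : y ∈ C) (hfx : HasFDerivAt f f'x x)
    (hfy : HasFDerivAt f f'y y) :
    0 ≤ (f'x - f'y) (x - y) := by
  have h₁ := hf.le_sub_of_hasFDerivAt hx hy hfx
  have h₂ := hf.le_sub_of_hasFDerivAt hy hx hfy
  rw [← neg_sub x y, map_neg] at h₁
  rw [_root_.sub_apply]
  linarith

theorem isOpen_image_of_hasStrictFDerivAt [CompleteSpace E] [CompleteSpace F] {f : E → F}
    {f' : E → E →L[ℝ] F} {C : Set E} (hC : IsOpen C) (hf : ∀ x ∈ C, HasStrictFDerivAt f (f' x) x)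
    (hsurj : ∀ x ∈ C, (f' x).range = ⊤) : IsOpen (f '' C) := by
  refine isOpen_iff_mem_nhds.2 ?_
  rintro _ ⟨x, hx, rfl⟩
  rw [← (hf x hx).map_nhds_eq_of_surj (hsurj x hx)]
  exact image_mem_map (hC.mem_nhds hx)

end NormedSpace

section MonotoneOperator

variable {E : Type*} [NormedAddCommGroup E] [InnerProductSpace ℝ E]

def IsMonotoneOperatorOn (g : E → E) (C : Set E) : Prop :=
  ∀ x ∈ C, ∀ y ∈ C, 0 ≤ ⟪g x - g y, x - y⟫

theorem eq_of_forall_inner_sub_sub_nonpos {K : Set E} {u a b : E} (ha : a ∈ K) (hb : b ∈ K)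
    (hA : ∀ y ∈ K, ⟪u - a, y - a⟫ ≤ 0) (hB : ∀ y ∈ K, ⟪u - b, y - b⟫ ≤ 0) : a = b := by
  have h : ⟪u - a, b - a⟫ + ⟪u - b, a - b⟫ = ‖b - a‖ ^ 2 := by
    rw [← real_inner_self_eq_norm_sq, ← neg_sub b a, inner_neg_right, ← sub_eq_add_neg,
      ← inner_sub_left]
    congr 1; abel
  have : ‖b - a‖ ^ 2 ≤ 0 := h ▸ add_nonpos (hA b hb) (hB a ha)
  exact (sub_eq_zero.1 (norm_eq_zero.1 (pow_eq_zero_iff two_ne_zero |>.1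
    (le_antisymm this (sq_nonneg _))))).symm

theorem injective_id_add_smul_of_inner_nonneg {A : E →L[ℝ] E} (hA : ∀ w, 0 ≤ ⟪A w, w⟫) {t : ℝ}
    (ht : 0 ≤ t) : Function.Injective (ContinuousLinearMap.id ℝ E + t • A) := by
  refine (injective_iff_map_eq_zero _).2 fun w hw => ?_
  have h : ‖w‖ ^ 2 + t * ⟪A w, w⟫ = 0 := by
    simpa [inner_add_left, real_inner_smul_left, real_inner_self_eq_norm_sq] using
      congrArg (⟪·, w⟫) hw
  have : ‖w‖ ^ 2 = 0 := by nlinarith [mul_nonneg ht (hA w), sq_nonneg ‖w‖]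
  simpa using this

namespace IsMonotoneOperatorOn

variable {g : E → E} {C : Set E}

theorem dist_le_dist_add_smul (hg : IsMonotoneOperatorOn g C) {x y : E} (hx : x ∈ C)
    (hy : y ∈ C) {t : ℝ} (ht : 0 ≤ t) : dist x y ≤ dist (x + t • g x) (y + t • g y) := by
  rw [dist_eq_norm, dist_eq_norm]
  have key : ‖x - y‖ * ‖x - y‖ ≤ ‖x + t • g x - (y + t • g y)‖ * ‖x - y‖ := by
    have : x + t • g x - (y + t • g y) = (x - y) + t • (g x - g y) := by
      rw [smul_sub]; abel
    calc ‖x - y‖ * ‖x - y‖ ≤ ⟪(x - y) + t • (g x - g y), x - y⟫ := by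
          rw [inner_add_left, real_inner_smul_left, real_inner_self_eq_norm_mul_norm]
          nlinarith [mul_nonneg ht (hg x hx y hy)]
      _ ≤ _ := this ▸ real_inner_le_norm _ _
  rcases (norm_nonneg (x - y)).eq_or_lt with h | h
  · exact h ▸ norm_nonneg _
  · exact le_of_mul_le_mul_right key h

theorem inner_sub_le_of_add_smul_eq (hg : IsMonotoneOperatorOn g C) {x y u : E} (hx : x ∈ C)
    (hy : y ∈ C) {t : ℝ} (ht : 0 ≤ t) (hu : x + t • g x = u) :
    ⟪u - x, y - x⟫ ≤ t * ⟪g y, y - x⟫ := by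
  have hmono := mul_nonneg ht (hg x hx y hy)
  rw [← hu, add_sub_cancel_left, real_inner_smul_left, ← neg_sub x y, inner_neg_right,
    inner_neg_right, inner_sub_left] at *
  nlinarith

theorem inner_sub_sub_nonpos_of_tendsto (hg : IsMonotoneOperatorOn g C) {xk : ℕ → E}
    {t : ℕ → ℝ} {u a : E} (hxk : ∀ k, xk k ∈ C) (ht : ∀ k, 0 ≤ t k)
    (ht0 : Tendsto t atTop (𝓝 0)) (heq : ∀ k, xk k + t k • g (xk k) = u)
    (ha : Tendsto xk atTop (𝓝 a)) : ∀ y ∈ closure C, ⟪u - a, y - a⟫ ≤ 0 := by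
  suffices hC : C ⊆ {y | ⟪u - a, y - a⟫ ≤ 0} from
    closure_minimal hC (isClosed_le (f := fun y => ⟪u - a, y - a⟫) (by fun_prop) continuous_const)
  intro y hy
  have hrhs : Tendsto (fun k => t k * ⟪g y, y - xk k⟫) atTop (𝓝 0) := by
    simpa using ht0.mul ((tendsto_const_nhds.sub ha).inner tendsto_const_nhds |>.congr
      fun k => real_inner_comm _ _)
  exact le_of_tendsto_of_tendsto' ((tendsto_const_nhds.sub ha).inner
    (tendsto_const_nhds.sub ha)) hrhs fun k =>
      hg.inner_sub_le_of_add_smul_eq (hxk k) hy (ht k) (heq k)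

theorem tendsto_of_add_smul_eq [FiniteDimensional ℝ E] (hg : IsMonotoneOperatorOn g C)
    {xk : ℕ → E} {t : ℕ → ℝ} {u xbar : E} (hxk : ∀ k, xk k ∈ C) (ht : ∀ k, 0 ≤ t k)
    (ht0 : Tendsto t atTop (𝓝 0)) (heq : ∀ k, xk k + t k • g (xk k) = u)
    (hxbar : xbar ∈ closure C) (hnormal : ∀ y ∈ closure C, ⟪u - xbar, y - xbar⟫ ≤ 0) :
    Tendsto xk atTop (𝓝 xbar) := by
  set z := xk 0
  obtain ⟨R, hR⟩ := (Metric.isBounded_range_of_tendsto (fun k => z + t k • g z)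
    (by simpa using tendsto_const_nhds.add (ht0.smul_const (g z)))).subset_closedBall u
  have hbdd : ∀ k, xk k ∈ Metric.closedBall z R := fun k =>
    calc dist (xk k) z ≤ dist (xk k + t k • g (xk k)) (z + t k • g z) :=
          hg.dist_le_dist_add_smul (hxk k) (hxk 0) (ht k)
      _ = dist (z + t k • g z) u := by rw [heq, dist_comm]
      _ ≤ R := hR ⟨k, rfl⟩
  refine (isCompact_closedBall z R).tendsto_nhds_of_unique_mapClusterPt (.of_forall hbdd)
    fun a _ ha => ?_
  obtain ⟨ψ, hψ, hlim⟩ := ha.tendsto_subseq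
  exact eq_of_forall_inner_sub_sub_nonpos
    (mem_closure_of_tendsto hlim (.of_forall fun k => hxk _)) hxbar
    (hg.inner_sub_sub_nonpos_of_tendsto (fun k => hxk _) (fun k => ht _)
      (ht0.comp hψ.tendsto_atTop) (fun k => heq _) hlim) hnormal

theorem isClosed_image_add_smul [FiniteDimensional ℝ E] (hg : IsMonotoneOperatorOn g C)
    (hC : IsOpen C) (hcont : ∀ x ∈ C, ContinuousAt g x)
    (hblow : ∀ (xk : ℕ → E) (b : E), (∀ k, xk k ∈ C) → b ∈ frontier C →
      Tendsto xk atTop (𝓝 b) → Tendsto (fun k => ‖g (xk k)‖) atTop atTop)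
    {t : ℝ} (ht : 0 < t) : IsClosed ((fun x => x + t • g x) '' C) := by
  refine isClosed_of_closure_subset fun y hy => ?_
  obtain ⟨w, hw, hwy⟩ := mem_closure_iff_seq_limit.1 hy
  choose xs hxs hxsw using hw
  obtain ⟨R, hR⟩ := (Metric.isBounded_range_of_tendsto w hwy).subset_closedBall (w 0)
  have hbdd : ∀ k, xs k ∈ Metric.closedBall (xs 0) R := fun k =>
    calc dist (xs k) (xs 0) ≤ dist (w k) (w 0) := by
          simpa only [hxsw] using hg.dist_le_dist_add_smul (hxs k) (hxs 0) ht.le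
      _ ≤ R := hR ⟨k, rfl⟩
  obtain ⟨a, -, ψ, hψ, hlim⟩ := tendsto_subseq_of_bounded Metric.isBounded_closedBall hbdd
  have hwψ : Tendsto (w ∘ ψ) atTop (𝓝 y) := hwy.comp hψ.tendsto_atTop
  have ha : a ∈ C := by
    by_contra haC
    have hfront : a ∈ frontier C :=
      ⟨mem_closure_of_tendsto hlim (.of_forall fun k => hxs _), by rwa [hC.interior_eq]⟩
    have hgconv : Tendsto (fun k => g (xs (ψ k))) atTop (𝓝 (t⁻¹ • (y - a))) := by
      refine ((hwψ.sub hlim).const_smul t⁻¹).congr fun k => ?_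
      simp [← hxsw, inv_smul_smul₀ ht.ne']
    exact not_tendsto_atTop_of_tendsto_nhds hgconv.norm
      (hblow _ a (fun k => hxs _) hfront hlim)
  refine ⟨a, ha, tendsto_nhds_unique ?_ hwψ⟩
  have hΨ : ContinuousAt (fun x => x + t • g x) a :=
    continuousAt_id.add ((hcont a ha).const_smul t)
  simpa only [Function.comp_def, ← hxsw] using hΨ.tendsto.comp hlim

theorem image_add_smul_eq_univ [FiniteDimensional ℝ E] (hg : IsMonotoneOperatorOn g C)
    (hC : IsOpen C) (hCne : C.Nonempty) {g' : E → E →L[ℝ] E}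
    (hg' : ∀ x ∈ C, HasStrictFDerivAt g (g' x) x) (hpos : ∀ x ∈ C, ∀ w, 0 ≤ ⟪g' x w, w⟫)
    (hblow : ∀ (xk : ℕ → E) (b : E), (∀ k, xk k ∈ C) → b ∈ frontier C →
      Tendsto xk atTop (𝓝 b) → Tendsto (fun k => ‖g (xk k)‖) atTop atTop)
    {t : ℝ} (ht : 0 < t) : (fun x => x + t • g x) '' C = univ := by
  refine IsClopen.eq_univ ⟨hg.isClosed_image_add_smul hC (fun x hx => (hg' x hx).continuousAt)
    hblow ht, ?_⟩ (hCne.image _)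
  refine isOpen_image_of_hasStrictFDerivAt hC
    (fun x hx => (hasStrictFDerivAt_id x).add ((hg' x hx).const_smul t)) fun x hx => ?_
  exact LinearMap.range_eq_top.2 (LinearMap.injective_iff_surjective.1
    (injective_id_add_smul_of_inner_nonneg (hpos x hx) ht.le))

end IsMonotoneOperatorOn

end MonotoneOperator

section Coordinates

variable {n : ℕ} {C : Set (Fin n → ℝ)} {φ : (Fin n → ℝ) → ℝ}

theorem dotProduct_apply_single (L : (Fin n → ℝ) →L[ℝ] ℝ) (w : Fin n → ℝ) :
    (fun i => L (Pi.single i 1)) ⬝ᵥ w = L w := by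
  conv_rhs => rw [← Finset.univ_sum_single w]
  simp only [dotProduct, map_sum]
  refine Finset.sum_congr rfl fun i _ => ?_
  rw [mul_comm, ← smul_eq_mul, ← map_smul, ← Pi.single_smul', smul_eq_mul, mul_one]

theorem gradVec_dotProduct (x w : Fin n → ℝ) : gradVec φ x ⬝ᵥ w = fderiv ℝ φ x w :=
  dotProduct_apply_single _ w

theorem hasStrictFDerivAt_gradVec (hC : IsOpen C) (hφ : ContDiffOn ℝ 2 φ C) {x : Fin n → ℝ}
    (hx : x ∈ C) :
    HasStrictFDerivAt (gradVec φ) (Matrix.mulVecLin (hessMat φ x)).toContinuousLinearMap x := by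
  have hφx : ContDiffAt ℝ 2 φ x := hφ.contDiffAt (hC.mem_nhds hx)
  have hD : HasStrictFDerivAt (fderiv ℝ φ) (fderiv ℝ (fderiv ℝ φ) x) x :=
    (hφx.fderiv_right le_rfl).hasStrictFDerivAt one_ne_zero
  refine hasStrictFDerivAt_pi'.2 fun i => ?_
  refine (hD.clm_apply (hasStrictFDerivAt_const (Pi.single i 1) x)).congr_fderiv ?_
  ext w
  have hsymm := hφx.isSymmSndFDerivAt (by simp) w (Pi.single i 1)
  simp only [ContinuousLinearMap.comp_zero, zero_add, ContinuousLinearMap.flip_apply, hsymm,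
    ContinuousLinearMap.comp_apply, LinearMap.coe_toContinuousLinearMap', mulVecBilin_apply,
    ContinuousLinearMap.proj_apply, mulVec, hessMat, iteratedFDeriv_two_apply, Fin.isValue,
    cons_val_zero, cons_val_one, cons_val_fin_one]
  exact (dotProduct_apply_single _ w).symm

/-- `∇φ` in the coordinates of `EuclideanSpace ℝ (Fin n)`, where the monotone-operator argument
has the inner product it needs. -/
noncomputable def euclideanGrad (φ : (Fin n → ℝ) → ℝ) (x : EuclideanSpace ℝ (Fin n)) :
    EuclideanSpace ℝ (Fin n) :=
  toLp 2 (gradVec φ (ofLp x))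

theorem isMonotoneOperatorOn_euclideanGrad (hC : IsOpen C) (hφ : ContDiffOn ℝ 2 φ C)
    (hconv : ConvexOn ℝ C φ) : IsMonotoneOperatorOn (euclideanGrad φ) (ofLp ⁻¹' C) := by
  intro x hx y hy
  have hdiff : ∀ z ∈ C, HasFDerivAt φ (fderiv ℝ φ z) z := fun z hz =>
    ((hφ.differentiableOn (by norm_num)).differentiableAt (hC.mem_nhds hz)).hasFDerivAt
  have := hconv.sub_apply_sub_nonneg hx hy (hdiff _ hx) (hdiff _ hy)
  change 0 ≤ ⟪toLp 2 (gradVec φ (ofLp x)) - toLp 2 (gradVec φ (ofLp y)), toLp 2 (ofLp x - ofLp y)⟫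
  rw [← WithLp.toLp_sub, EuclideanSpace.inner_toLp_toLp, star_trivial, dotProduct_comm,
    sub_dotProduct, gradVec_dotProduct, gradVec_dotProduct]
  simpa using this

theorem hasStrictFDerivAt_euclideanGrad (hC : IsOpen C) (hφ : ContDiffOn ℝ 2 φ C)
    {x : EuclideanSpace ℝ (Fin n)} (hx : ofLp x ∈ C) :
    HasStrictFDerivAt (euclideanGrad φ) (toEuclideanCLM (𝕜 := ℝ) (hessMat φ (ofLp x))) x := by
  set e := EuclideanSpace.equiv (Fin n) ℝ
  exact (e.symm.hasStrictFDerivAt.comp x ((hasStrictFDerivAt_gradVec hC hφ hx).comp x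
    e.hasStrictFDerivAt)).congr_fderiv (by ext; rfl)

theorem tendsto_norm_euclideanGrad_atTop
    (hblow : ∀ (xk : ℕ → Fin n → ℝ) (b : Fin n → ℝ), (∀ k, xk k ∈ C) →
      b ∈ frontier C → Tendsto xk atTop (𝓝 b) →
      Tendsto (fun k => ‖gradVec φ (xk k)‖) atTop atTop)
    (xk : ℕ → EuclideanSpace ℝ (Fin n)) (b : EuclideanSpace ℝ (Fin n))
    (hxk : ∀ k, xk k ∈ ofLp ⁻¹' C) (hb : b ∈ frontier (ofLp ⁻¹' C))
    (hlim : Tendsto xk atTop (𝓝 b)) :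
    Tendsto (fun k => ‖euclideanGrad φ (xk k)‖) atTop atTop := by
  set e := EuclideanSpace.equiv (Fin n) ℝ
  have hb' : b ∈ e.toHomeomorph ⁻¹' frontier C := by rwa [Homeomorph.preimage_frontier]
  refine tendsto_atTop_mono (fun k => ?_)
    (hblow _ _ hxk hb' ((e.continuous.tendsto b).comp hlim))
  exact (pi_norm_le_iff_of_nonneg (norm_nonneg _)).2 fun i =>
    PiLp.norm_apply_le (euclideanGrad φ (xk k)) i

theorem exists_tendsto_add_smul_gradVec_eq (hC : IsOpen C) (hφ : ContDiffOn ℝ 2 φ C)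
    (hconv : ConvexOn ℝ C φ) (hPD : ∀ x ∈ C, (hessMat φ x).PosDef)
    (hblow : ∀ (xk : ℕ → Fin n → ℝ) (b : Fin n → ℝ), (∀ k, xk k ∈ C) →
      b ∈ frontier C → Tendsto xk atTop (𝓝 b) →
      Tendsto (fun k => ‖gradVec φ (xk k)‖) atTop atTop)
    {xbar v : Fin n → ℝ} (hxbar : xbar ∈ closure C)
    (hv : ∀ y ∈ closure C, v ⬝ᵥ (y - xbar) ≤ 0) {t : ℕ → ℝ} (ht : ∀ k, 0 < t k)
    (ht0 : Tendsto t atTop (𝓝 0)) :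
    ∃ xk : ℕ → Fin n → ℝ, (∀ k, xk k ∈ C) ∧ (∀ k, xk k + t k • gradVec φ (xk k) = xbar + v) ∧
      Tendsto xk atTop (𝓝 xbar) := by
  set e := EuclideanSpace.equiv (Fin n) ℝ
  have hg := isMonotoneOperatorOn_euclideanGrad hC hφ hconv
  have hpos : ∀ x : EuclideanSpace ℝ (Fin n), ofLp x ∈ C → ∀ w,
      0 ≤ ⟪toEuclideanCLM (𝕜 := ℝ) (hessMat φ (ofLp x)) w, w⟫ := fun x hx w => by
    rw [real_inner_comm, inner_toEuclideanCLM]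
    simpa using (hPD _ hx).posSemidef.dotProduct_mulVec_nonneg (ofLp w)
  have hsurj (k : ℕ) : ∃ x ∈ ofLp ⁻¹' C, x + t k • euclideanGrad φ x = toLp 2 (xbar + v) :=
    (hg.image_add_smul_eq_univ (hC.preimage e.continuous)
      ((closure_nonempty_iff.1 ⟨xbar, hxbar⟩).preimage e.surjective)
      (fun x hx => hasStrictFDerivAt_euclideanGrad hC hφ hx) hpos
      (tendsto_norm_euclideanGrad_atTop hblow) (ht k)).symm.subset (mem_univ _)
  choose x hxC hx_eq using hsurj
  have hlim : Tendsto x atTop (𝓝 (toLp 2 xbar)) := by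
    have hcl : closure (ofLp ⁻¹' C) = ofLp ⁻¹' closure C := (e.preimage_closure C).symm
    refine hg.tendsto_of_add_smul_eq hxC (fun k => (ht k).le) ht0 hx_eq (hcl ▸ hxbar) ?_
    rw [hcl]
    intro y hy
    change ⟪_, toLp 2 (ofLp y) - toLp 2 xbar⟫ ≤ 0
    rw [← WithLp.toLp_sub, ← WithLp.toLp_sub, add_sub_cancel_left, EuclideanSpace.inner_toLp_toLp,
      star_trivial, dotProduct_comm]
    exact hv _ hy
  exact ⟨fun k => ofLp (x k), hxC, fun k => congrArg ofLp (hx_eq k),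
    (e.continuous.tendsto _).comp hlim⟩

end Coordinates

theorem stmt5_general {n : ℕ} (C : Set (Fin n → ℝ)) (φ : (Fin n → ℝ) → ℝ)
    (hCopen : IsOpen C)
    (hφ : ContDiffOn ℝ 2 φ C) (hstrict : StrictConvexOn ℝ C φ)
    (hPD : ∀ x ∈ C, (hessMat φ x).PosDef)
    (hblow : ∀ (xk : ℕ → Fin n → ℝ) (b : Fin n → ℝ), (∀ k, xk k ∈ C) →
      b ∈ frontier C → Tendsto xk atTop (𝓝 b) →
      Tendsto (fun k => ‖gradVec φ (xk k)‖) atTop atTop)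
    (hsup : ∀ ρ > (0:ℝ), ∃ M : ℝ, ∀ x ∈ C, ‖x‖ ≤ ρ →
      ‖(hessMat φ x)⁻¹ *ᵥ gradVec φ x‖ ≤ M) :
    ∀ xbar ∈ closure C,
      {v : Fin n → ℝ | ∀ y ∈ closure C, v ⬝ᵥ (y - xbar) ≤ 0} ⊆
      {d : Fin n → ℝ | ∃ (xk ek : ℕ → Fin n → ℝ),
        (∀ k, xk k ∈ C) ∧ Tendsto xk atTop (𝓝 xbar) ∧ Tendsto ek atTop (𝓝 0) ∧
        Tendsto (fun k => hessMat φ (xk k) *ᵥ ek k) atTop (𝓝 d)} := by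
  intro xbar hxbar v hv
  set t : ℕ → ℝ := fun k => 1 / ((k : ℝ) + 1)
  have ht0 : Tendsto t atTop (𝓝 0) := tendsto_one_div_add_atTop_nhds_zero_nat
  obtain ⟨xk, hxkC, hxk_eq, hxk_lim⟩ := exists_tendsto_add_smul_gradVec_eq hCopen hφ
    hstrict.convexOn hPD hblow hxbar hv (fun k => by positivity) ht0
  obtain ⟨ρ, hρ⟩ := isBounded_iff_forall_norm_le.1 (Metric.isBounded_range_of_tendsto xk hxk_lim)
  obtain ⟨M, hM⟩ := hsup (max ρ 1) (by positivity)
  refine ⟨xk, fun k => t k • ((hessMat φ (xk k))⁻¹ *ᵥ gradVec φ (xk k)), hxkC, hxk_lim,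
    ht0.zero_smul_isBoundedUnder_le ⟨M, eventually_map.2 (.of_forall fun k =>
      hM _ (hxkC k) ((hρ _ ⟨k, rfl⟩).trans (le_max_left _ _)))⟩, ?_⟩
  have hHe (k : ℕ) : hessMat φ (xk k) *ᵥ (t k • ((hessMat φ (xk k))⁻¹ *ᵥ gradVec φ (xk k))) =
      xbar + v - xk k := by
    have hunit := (isUnit_iff_isUnit_det _).1 (hPD _ (hxkC k)).isUnit
    rw [mulVec_smul, mulVec_mulVec, mul_nonsing_inv _ hunit, one_mulVec, ← hxk_eq k,
      add_sub_cancel_left]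
  simp_rw [hHe]
  simpa using (tendsto_const_nhds (x := xbar + v)).sub hxk_lim

/-- For a Legendre `φ` on an open convex `C`, C² with positive definite
Hessian, such that `‖∇²φ(x)⁻¹∇φ(x)‖` is bounded on bounded subsets of `C`, every normal
direction to `cl C` at any `xbar ∈ cl C` is a limit of `∇²φ(x_k) e_k` with `x_k → xbar` in `C`
and `e_k → 0`. -/
theorem stmt5 {n : ℕ} (C : Set (Fin n → ℝ)) (φ : (Fin n → ℝ) → ℝ)
    (hCopen : IsOpen C) (hCconv : Convex ℝ C) (hCne : C.Nonempty)
    (hφ : ContDiffOn ℝ 2 φ C) (hstrict : StrictConvexOn ℝ C φ)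
    (hPD : ∀ x ∈ C, (hessMat φ x).PosDef)
    (hblow : ∀ (xk : ℕ → Fin n → ℝ) (b : Fin n → ℝ), (∀ k, xk k ∈ C) →
      b ∈ frontier C → Tendsto xk atTop (𝓝 b) →
      Tendsto (fun k => ‖gradVec φ (xk k)‖) atTop atTop)
    (hsup : ∀ ρ > (0:ℝ), ∃ M : ℝ, ∀ x ∈ C, ‖x‖ ≤ ρ →
      ‖(hessMat φ x)⁻¹ *ᵥ gradVec φ x‖ ≤ M) :
    ∀ xbar ∈ closure C,
      {v : Fin n → ℝ | ∀ y ∈ closure C, v ⬝ᵥ (y - xbar) ≤ 0} ⊆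
      {d : Fin n → ℝ | ∃ (xk ek : ℕ → Fin n → ℝ),
        (∀ k, xk k ∈ C) ∧ Tendsto xk atTop (𝓝 xbar) ∧ Tendsto ek atTop (𝓝 0) ∧
        Tendsto (fun k => hessMat φ (xk k) *ᵥ ek k) atTop (𝓝 d)} :=
  stmt5_general C φ hCopen hφ hstrict hPD hblow hsup
end

section
/- Let f : ℝⁿ → ℝ be locally Lipschitz, A ∈ ℝ^{m×n}, x̄ ∈ ℝⁿ with x̄ ≥ 0, and let 𝒥 = {j : x̄_j = 0}. Suppose the convex compact set ∂_𝒥 f(x̄) (the 𝒥-components of the Clarke subdifferential) is disjoint from the convex set S = {s ∈ ℝ^{|𝒥|} : s ≥ A_𝒥ᵀ y for some y ∈ ℝᵐ}. Then there exists u ∈ ℝ^{|𝒥|} with u ≥ 0, A_𝒥 u = 0, and ⟨u, d⟩ < 0 for every d ∈ ∂_𝒥 f(x̄). -/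
open Matrix Filter Topology

noncomputable def clarkeSubdiff {n : ℕ} (f : (Fin n → ℝ) → ℝ) (x : Fin n → ℝ) :
    Set (Fin n → ℝ) :=
  convexHull ℝ {v | ∃ u : ℕ → Fin n → ℝ, (∀ k, DifferentiableAt ℝ f (u k)) ∧
    Tendsto u atTop (𝓝 x) ∧
    ∀ w : Fin n → ℝ, Tendsto (fun k => fderiv ℝ f (u k) w) atTop (𝓝 (v ⬝ᵥ w))}

/-
The cone `S` is finitely generated (by `±` the rows of `A`, the unit vectors, and `-eⱼ` for
`j ∉ 𝒥`), hence closed, and the Clarke subdifferential is compact: it is the convex hull of the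
set of limiting gradients, which is closed and bounded by the local Lipschitz constant. A linear
functional strictly separating the two is then nonnegative on the cone `S` and negative on
`∂f(x̄)`; its coefficient vector `u` is the required one, the signs `u ≥ 0`, `A u = 0` and
`u_j = 0` off `𝒥` being read off from its values on the generators of `S`.
-/

open Set Function

lemma exists_nonneg_coeff_eq_zero_sum_smul_eq {E ι : Type*} [AddCommGroup E] [Module ℝ E]
    [Fintype ι] {v : ι → E} {g c : ι → ℝ} (hg : ∑ i, g i • v i = 0) (hpos : ∃ i, 0 < g i)
    (hc : 0 ≤ c) :
    ∃ i₀, ∃ c' : ι → ℝ, 0 ≤ c' ∧ c' i₀ = 0 ∧ ∑ i, c' i • v i = ∑ i, c i • v i := by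
  classical
  obtain ⟨i₀, hi₀, hmin⟩ := (Finset.univ.filter fun i => 0 < g i).exists_min_image
    (fun i => c i / g i) (by simpa [Finset.filter_nonempty_iff] using hpos)
  simp only [Finset.mem_filter, Finset.mem_univ, true_and] at hi₀ hmin
  -- the largest step along `-g` that keeps all coefficients nonnegative
  set t := c i₀ / g i₀
  refine ⟨i₀, c - t • g, fun i => ?_, ?_, ?_⟩
  · simp only [Pi.sub_apply, Pi.smul_apply, smul_eq_mul, Pi.zero_apply, sub_nonneg]
    rcases lt_or_ge 0 (g i) with h | h
    · exact (le_div_iff₀ h).1 (hmin i h)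
    · exact (mul_nonpos_of_nonneg_of_nonpos (div_nonneg (hc i₀) hi₀.le) h).trans (hc i)
  · simp [t, div_mul_cancel₀ _ hi₀.ne']
  · simp [sub_smul, Finset.sum_sub_distrib, mul_smul, ← Finset.smul_sum, hg]

namespace PointedCone

variable {E : Type*} [AddCommGroup E] [Module ℝ E]

lemma mem_hull_finset {s : Finset E} {x : E} :
    x ∈ hull ℝ (s : Set E) ↔ ∃ c : s → ℝ, 0 ≤ c ∧ ∑ a, c a • (a : E) = x := by
  rw [Submodule.mem_span_finset']
  constructor
  · rintro ⟨c, rfl⟩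
    exact ⟨fun a => c a, fun a => (c a).2, rfl⟩
  · rintro ⟨c, hc, rfl⟩
    exact ⟨fun a => ⟨c a, hc a⟩, rfl⟩

lemma hull_subset_iUnion_hull_erase [DecidableEq E] {s : Finset E}
    (hs : ¬ LinearIndependent ℝ ((↑) : s → E)) :
    (hull ℝ (s : Set E) : Set E) ⊆ ⋃ a ∈ s, (hull ℝ (s.erase a : Set E) : Set E) := by
  intro x hx
  obtain ⟨c, hc, rfl⟩ := mem_hull_finset.1 hx
  obtain ⟨g, hg, hgpos⟩ : ∃ g : s → ℝ, ∑ a, g a • (a : E) = 0 ∧ ∃ a, 0 < g a := by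
    obtain ⟨g, hg, i, hi⟩ := Fintype.not_linearIndependent_iff.1 hs
    rcases hi.lt_or_gt with h | h
    · refine ⟨-g, ?_, i, by simpa using h⟩
      simp only [Pi.neg_apply, neg_smul, Finset.sum_neg_distrib, hg, neg_zero]
    · exact ⟨g, hg, i, h⟩
  obtain ⟨a₀, c', hc', ha₀, hsum⟩ := exists_nonneg_coeff_eq_zero_sum_smul_eq hg hgpos hc
  refine mem_iUnion₂.2 ⟨a₀, a₀.2, ?_⟩
  rw [← hsum]
  refine Submodule.sum_mem _ fun a _ => ?_
  by_cases h : a = a₀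
  · simp [h, ha₀]
  · exact (hull ℝ _).smul_mem (hc' a)
      (subset_hull (Finset.mem_erase.2 ⟨Subtype.coe_injective.ne h, a.2⟩))

lemma smul_mem_of_neg_mem {C : PointedCone ℝ E} {x : E} (hx : x ∈ C) (hnx : -x ∈ C)
    (t : ℝ) : t • x ∈ C :=
  C.lineal_le (C.lineal.smul_mem t (mem_lineal.2 ⟨hx, hnx⟩))

variable [TopologicalSpace E] [IsTopologicalAddGroup E] [ContinuousSMul ℝ E] [T2Space E]

lemma isClosed_hull_of_linearIndependent {s : Finset E}
    (hs : LinearIndependent ℝ ((↑) : s → E)) : IsClosed (hull ℝ (s : Set E) : Set E) := by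
  have : (hull ℝ (s : Set E) : Set E) =
      Fintype.linearCombination ℝ ((↑) : s → E) '' Ici 0 := by
    ext x
    simp [mem_hull_finset, Fintype.linearCombination_apply]
  rw [this]
  exact (LinearMap.isClosedEmbedding_of_injective (LinearMap.ker_eq_bot.2
    hs.fintypeLinearCombination_injective)).isClosedMap _ isClosed_Ici

theorem isClosed_of_fg {C : PointedCone ℝ E} (hC : C.FG) : IsClosed (C : Set E) := by
  classical
  obtain ⟨s, rfl⟩ := hC
  induction s using Finset.strongInduction with
  | H s ih =>
    by_cases hs : LinearIndependent ℝ ((↑) : s → E)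
    · exact isClosed_hull_of_linearIndependent hs
    · have : (hull ℝ (s : Set E) : Set E) =
          ⋃ a ∈ s, (hull ℝ (s.erase a : Set E) : Set E) :=
        (hull_subset_iUnion_hull_erase hs).antisymm
          (iUnion₂_subset fun a _ => Submodule.span_mono (Finset.coe_subset.2 (s.erase_subset a)))
      rw [this]
      exact s.finite_toSet.isClosed_biUnion fun a ha => ih _ (Finset.erase_ssubset ha)

end PointedCone

theorem IsCompact.convexHull {E : Type*} [AddCommGroup E] [Module ℝ E] [TopologicalSpace E]
    [IsTopologicalAddGroup E] [ContinuousSMul ℝ E] [FiniteDimensional ℝ E] {s : Set E}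
    (hs : IsCompact s) : IsCompact (convexHull ℝ s) := by
  obtain rfl | ⟨p, hp⟩ := s.eq_empty_or_nonempty
  · simp
  set N := Module.finrank ℝ E + 1
  suffices _root_.convexHull ℝ s =
      (fun q : (Fin N → ℝ) × (Fin N → E) => ∑ i, q.1 i • q.2 i) ''
        (stdSimplex ℝ (Fin N) ×ˢ univ.pi fun _ => s) by
    rw [this]
    exact ((isCompact_stdSimplex ℝ _).prod (isCompact_univ_pi fun _ => hs)).image (by fun_prop)
  refine subset_antisymm (fun x hx => ?_) ?_
  · obtain ⟨ι, _, z, w, hzs, hz, hw0, hw1, rfl⟩ := eq_pos_convex_span_of_mem_convexHull hx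
    obtain ⟨e⟩ : Nonempty (ι ↪ Fin N) := Function.Embedding.nonempty_of_card_le <| by
      simpa [N] using hz.card_le_finrank_succ.trans (by gcongr; exact Submodule.finrank_le _)
    -- Carathéodory: at most `N` points are needed; pad to `Fin N` with zero weights.
    set w' := extend e w 0
    set z' := extend e z fun _ => p
    have hw' : ∀ j ∉ range e, w' j = 0 := fun j hj => extend_apply' _ _ _ hj
    refine ⟨(w', z'), ⟨⟨fun j => ?_, ?_⟩, fun j _ => ?_⟩, ?_⟩
    · by_cases hj : j ∈ range e
      · obtain ⟨i, rfl⟩ := hj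
        simpa [w', e.injective.extend_apply] using (hw0 i).le
      · simp [hw' j hj]
    · rw [← hw1]
      exact (Fintype.sum_of_injective e e.injective _ _ hw'
        fun i => (e.injective.extend_apply ..).symm).symm
    · by_cases hj : j ∈ range e
      · obtain ⟨i, rfl⟩ := hj
        simpa [z', e.injective.extend_apply] using hzs (mem_range_self i)
      · simpa [z', extend_apply' _ _ _ hj] using hp
    · exact (Fintype.sum_of_injective e e.injective _ _ (fun j hj => by simp [hw' j hj])
        fun i => by simp [w', z', e.injective.extend_apply]).symm
  · rintro _ ⟨⟨w, z⟩, ⟨hw, hz⟩, rfl⟩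
    exact (convex_convexHull ℝ s).sum_mem (fun i _ => hw.1 i) hw.2
      fun i _ => subset_convexHull ℝ s (hz i trivial)

lemma LinearMap.apply_eq_dotProduct {ι R : Type*} [Fintype ι] [DecidableEq ι] [CommSemiring R]
    (L : (ι → R) →ₗ[R] R) (x : ι → R) : L x = (fun i => L (Pi.single i 1)) ⬝ᵥ x := by
  conv_lhs => rw [← Finset.univ_sum_single x]
  simp only [dotProduct, map_sum]
  refine Finset.sum_congr rfl fun i _ => ?_
  rw [mul_comm, ← smul_eq_mul, ← map_smul, ← Pi.single_smul', smul_eq_mul, mul_one]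

lemma tendsto_dotProduct_iff_tendsto_apply_single {ι κ : Type*} [Fintype κ] [DecidableEq κ]
    {l : Filter ι} {L : ι → (κ → ℝ) →L[ℝ] ℝ} {v : κ → ℝ} :
    (∀ w, Tendsto (fun k => L k w) l (𝓝 (v ⬝ᵥ w))) ↔
      Tendsto (fun k j => L k (Pi.single j 1)) l (𝓝 v) := by
  refine ⟨fun h => tendsto_pi_nhds.2 fun j => by simpa using h (Pi.single j 1), fun h w => ?_⟩
  have hL : ∀ k, L k w = (fun j => L k (Pi.single j 1)) ⬝ᵥ w := fun k =>
    (L k : (κ → ℝ) →ₗ[ℝ] ℝ).apply_eq_dotProduct w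
  simp_rw [hL]
  exact ((continuous_id.dotProduct continuous_const).tendsto v).comp h

section Clarke

variable {n : ℕ} (f : (Fin n → ℝ) → ℝ) (x : Fin n → ℝ)

noncomputable def partialDerivs (y : Fin n → ℝ) : Fin n → ℝ :=
  fun j => fderiv ℝ f y (Pi.single j 1)

-- Cluster points rather than sequential limits, so that closedness comes for free.
def limitingGradients : Set (Fin n → ℝ) :=
  {v | MapClusterPt v (comap ((↑) : {y // DifferentiableAt ℝ f y} → Fin n → ℝ) (𝓝 x))
    fun y => partialDerivs f y}

lemma clarkeSubdiff_eq_convexHull_limitingGradients :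
    clarkeSubdiff f x = convexHull ℝ (limitingGradients f x) := by
  unfold clarkeSubdiff
  congr 1
  ext v
  simp only [tendsto_dotProduct_iff_tendsto_apply_single, mem_ofPred_eq]
  constructor
  · rintro ⟨u, hdiff, hux, hv⟩
    exact MapClusterPt.of_comp (φ := fun k => ⟨u k, hdiff k⟩) (tendsto_comap_iff.2 hux)
      hv.mapClusterPt
  · intro hv
    obtain ⟨ψ, hψv, hψx⟩ := hv.exists_seq_tendsto
    exact ⟨fun k => ψ k, fun k => (ψ k).2, tendsto_comap_iff.1 hψx, hψv⟩

lemma isClosed_limitingGradients : IsClosed (limitingGradients f x) :=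
  isClosed_setOfPred_clusterPt

lemma norm_partialDerivs_le (y : Fin n → ℝ) :
    ‖partialDerivs f y‖ ≤ ‖fderiv ℝ f y‖ :=
  (pi_norm_le_iff_of_nonneg (norm_nonneg _)).2 fun j =>
    ((fderiv ℝ f y).le_opNorm _).trans (by simp [Pi.norm_single])

variable {f}

lemma LocallyLipschitz.isBounded_limitingGradients (hf : LocallyLipschitz f) :
    Bornology.IsBounded (limitingGradients f x) := by
  obtain ⟨K, t, ht, hK⟩ := hf x
  refine (Metric.isBounded_closedBall (x := 0) (r := K)).subset fun v hv => ?_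
  refine Metric.isClosed_closedBall.mem_of_mapClusterPt hv ?_
  filter_upwards [(eventually_mem_nhds_iff.2 ht).comap _] with y hy
  exact mem_closedBall_zero_iff.2
    ((norm_partialDerivs_le f y).trans (norm_fderiv_le_of_lipschitzOn ℝ hy hK))

theorem LocallyLipschitz.isCompact_clarkeSubdiff (hf : LocallyLipschitz f) :
    IsCompact (clarkeSubdiff f x) := by
  rw [clarkeSubdiff_eq_convexHull_limitingGradients]
  exact (Metric.isCompact_of_isClosed_isBounded (isClosed_limitingGradients f x)
    (hf.isBounded_limitingGradients x)).convexHull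

end Clarke

section DominatingCone

variable {m n : ℕ} (A : Matrix (Fin m) (Fin n) ℝ) (J : Set (Fin n))

-- The paper's `S ⊆ ℝ^𝒥`, pulled back to `ℝⁿ`: the coordinates outside `J` are unconstrained.
def dominatingConeGenerators : Set (Fin n → ℝ) :=
  range (fun i => A i) ∪ range (fun i => -A i) ∪ range (fun j => Pi.single j 1) ∪
    (fun j => -Pi.single j 1) '' Jᶜ

def dominatingCone : PointedCone ℝ (Fin n → ℝ) :=
  PointedCone.hull ℝ (dominatingConeGenerators A J)

lemma isClosed_dominatingCone : IsClosed (dominatingCone A J : Set (Fin n → ℝ)) :=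
  PointedCone.isClosed_of_fg <| Submodule.fg_span <|
    (((finite_range _).union (finite_range _)).union (finite_range _)).union (toFinite _)

variable {A J}

lemma mem_dominatingCone {d : Fin n → ℝ} :
    d ∈ dominatingCone A J ↔ ∃ y, ∀ j ∈ J, (Aᵀ *ᵥ y) j ≤ d j := by
  constructor
  · intro hd
    induction hd using Submodule.span_induction with
    | mem x hx =>
      rcases hx with ((⟨i, rfl⟩ | ⟨i, rfl⟩) | ⟨j, rfl⟩) | ⟨j, hj, rfl⟩
      · exact ⟨Pi.single i 1, fun j _ => by simp⟩
      · exact ⟨-Pi.single i 1, fun j _ => by simp [mulVec_neg]⟩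
      · exact ⟨0, fun j' _ => by by_cases h : j' = j <;> simp [h]⟩
      · exact ⟨0, fun j' hj' => by simp [ne_of_mem_of_not_mem hj' hj]⟩
    | zero => exact ⟨0, fun j _ => by simp⟩
    | add x z _ _ hx hz =>
      obtain ⟨y₁, hy₁⟩ := hx
      obtain ⟨y₂, hy₂⟩ := hz
      exact ⟨y₁ + y₂, fun j hj => by
        simpa [mulVec_add] using add_le_add (hy₁ j hj) (hy₂ j hj)⟩
    | smul c x _ hx =>
      obtain ⟨y, hy⟩ := hx
      exact ⟨(c : ℝ) • y, fun j hj => by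
        rw [mulVec_smul]
        exact mul_le_mul_of_nonneg_left (hy j hj) c.2⟩
  · rintro ⟨y, hy⟩
    have hgen : ∀ x ∈ dominatingConeGenerators A J, x ∈ dominatingCone A J :=
      fun x hx => PointedCone.subset_hull hx
    rw [← add_sub_cancel (Aᵀ *ᵥ y) d, ← Finset.univ_sum_single (d - _)]
    refine add_mem ?_ (Submodule.sum_mem _ fun j _ => ?_)
    · rw [mulVec_transpose, vecMul_eq_sum]
      refine Submodule.sum_mem _ fun i _ => ?_
      exact PointedCone.smul_mem_of_neg_mem (hgen _ (.inl (.inl (.inl ⟨i, rfl⟩))))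
        (hgen _ (.inl (.inl (.inr ⟨i, rfl⟩)))) (y i)
    · rw [← mul_one ((d - _) j), ← smul_eq_mul, Pi.single_smul']
      by_cases hj : j ∈ J
      · exact (dominatingCone A J).smul_mem (sub_nonneg.2 (hy j hj))
          (hgen _ (.inl (.inr ⟨j, rfl⟩)))
      · exact PointedCone.smul_mem_of_neg_mem (hgen _ (.inl (.inr ⟨j, rfl⟩)))
          (hgen _ (.inr ⟨j, hj, rfl⟩)) _

lemma nonneg_and_mulVec_eq_zero_of_nonneg_on_dominatingCone {u : Fin n → ℝ}
    (hu : ∀ d ∈ dominatingCone A J, 0 ≤ u ⬝ᵥ d) :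
    (∀ j, 0 ≤ u j) ∧ (∀ j ∉ J, u j = 0) ∧ A *ᵥ u = 0 := by
  have hgen : ∀ x ∈ dominatingConeGenerators A J, 0 ≤ u ⬝ᵥ x :=
    fun x hx => hu x (PointedCone.subset_hull hx)
  have hsingle : ∀ j, 0 ≤ u j := fun j => by
    simpa using hgen _ (.inl (.inr ⟨j, rfl⟩))
  refine ⟨hsingle, fun j hj => ?_, funext fun i => ?_⟩
  · have := hgen _ (.inr ⟨j, hj, rfl⟩)
    rw [dotProduct_neg, dotProduct_single_one, neg_nonneg] at this
    exact this.antisymm (hsingle j)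
  · have h₁ := hgen _ (.inl (.inl (.inl ⟨i, rfl⟩)))
    have h₂ := hgen _ (.inl (.inl (.inr ⟨i, rfl⟩)))
    rw [dotProduct_neg, neg_nonneg] at h₂
    rw [Pi.zero_apply, ← h₁.antisymm' h₂, dotProduct_comm]
    rfl

end DominatingCone

theorem stmt6_general {n m : ℕ} (f : (Fin n → ℝ) → ℝ) (hf : LocallyLipschitz f)
    (A : Matrix (Fin m) (Fin n) ℝ) (xbar : Fin n → ℝ)
    (hdisj : ¬ ∃ d ∈ clarkeSubdiff f xbar, ∃ y : Fin m → ℝ,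
      ∀ j, xbar j = 0 → (Aᵀ *ᵥ y) j ≤ d j) :
    ∃ u : Fin n → ℝ, (∀ j, 0 ≤ u j) ∧ (∀ j, xbar j ≠ 0 → u j = 0) ∧
      A *ᵥ u = 0 ∧ ∀ d ∈ clarkeSubdiff f xbar, ∑ j, u j * d j < 0 := by
  let S : ProperCone ℝ (Fin n → ℝ) :=
    ⟨dominatingCone A {j | xbar j = 0}, isClosed_dominatingCone _ _⟩
  obtain ⟨φ, hφS, hφK⟩ := S.hyperplane_separation (convex_convexHull ℝ _)
    (hf.isCompact_clarkeSubdiff xbar)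
    (disjoint_left.2 fun d hd hdS => hdisj ⟨d, hd, mem_dominatingCone.1 hdS⟩)
  set u : Fin n → ℝ := fun j => φ (Pi.single j 1)
  have hφ : ∀ d, φ d = u ⬝ᵥ d := fun d => (φ : (Fin n → ℝ) →ₗ[ℝ] ℝ).apply_eq_dotProduct d
  obtain ⟨hu, hu_compl, hAu⟩ :=
    nonneg_and_mulVec_eq_zero_of_nonneg_on_dominatingCone fun d hd => hφ d ▸ hφS d hd
  exact ⟨u, hu, hu_compl, hAu, fun d hd => (hφ d ▸ hφK d hd : u ⬝ᵥ d < 0)⟩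

/-- If the `𝒥 = {j : x̄_j = 0}` components of the Clarke subdifferential
`∂f(x̄)` are disjoint from `S = {s : s ≥ A_𝒥ᵀ y for some y}`, then there exists `u ≥ 0`
supported on `𝒥` with `A_𝒥 u = 0` and `⟨u, d⟩ < 0` for all `d ∈ ∂_𝒥 f(x̄)`. -/
theorem stmt6 {n m : ℕ} (f : (Fin n → ℝ) → ℝ) (hf : LocallyLipschitz f)
    (A : Matrix (Fin m) (Fin n) ℝ) (xbar : Fin n → ℝ) (hx : ∀ j, 0 ≤ xbar j)
    (hdisj : ¬ ∃ d ∈ clarkeSubdiff f xbar, ∃ y : Fin m → ℝ,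
      ∀ j, xbar j = 0 → (Aᵀ *ᵥ y) j ≤ d j) :
    ∃ u : Fin n → ℝ, (∀ j, 0 ≤ u j) ∧ (∀ j, xbar j ≠ 0 → u j = 0) ∧
      A *ᵥ u = 0 ∧ ∀ d ∈ clarkeSubdiff f xbar, ∑ j, u j * d j < 0 :=
  stmt6_general f hf A xbar hdisj
end

section
/- Let G : ℝⁿ → ℝⁿ×ⁿ be a continuous matrix-valued map and ∂f an outer-semicontinuous, locally bounded set-valued map with nonempty compact convex values. Let x_{k_j} → x̄ and v_{k_j} ∈ G(x_{k_j})∂f(x_{k_j}) + Δ_{k_j} with ‖Δ_{k_j}‖ → 0. Then dist((1/N)Σ_{j=1}^N v_{k_j}, G(x̄)∂f(x̄)) → 0 as N → ∞, provided G(x̄)∂f(x̄) is convex. -/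
set_option maxHeartbeats 1000000


open Matrix Filter Topology

/-- Let `G` be a continuous matrix-valued map and `D` an
outer-semicontinuous, locally bounded set-valued map with nonempty compact convex values.
If `x_{k_j} → x̄` and `v_{k_j} ∈ G(x_{k_j}) D(x_{k_j}) + Δ_{k_j}` with `‖Δ_{k_j}‖ → 0`,
and `G(x̄)D(x̄)` is convex, then the distance of the Cesàro averages `(1/N)Σ v_{k_j}` to
`G(x̄)D(x̄)` tends to `0`. -/
theorem stmt14 {n : ℕ} (G : (Fin n → ℝ) → Matrix (Fin n) (Fin n) ℝ) (hG : Continuous G)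
    (D : (Fin n → ℝ) → Set (Fin n → ℝ))
    (hne : ∀ x, (D x).Nonempty) (hcomp : ∀ x, IsCompact (D x))
    (hconv : ∀ x, Convex ℝ (D x))
    (hosc : ∀ (xk dk : ℕ → Fin n → ℝ) (a b : Fin n → ℝ), (∀ k, dk k ∈ D (xk k)) →
      Tendsto xk atTop (𝓝 a) → Tendsto dk atTop (𝓝 b) → b ∈ D a)
    (hloc : ∀ a : Fin n → ℝ, ∃ r > (0:ℝ), ∃ M : ℝ, ∀ y ∈ Metric.ball a r,
      ∀ d ∈ D y, ‖d‖ ≤ M)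
    (xbar : Fin n → ℝ) (x v Δ : ℕ → Fin n → ℝ)
    (hx : Tendsto x atTop (𝓝 xbar))
    (hv : ∀ j, ∃ d ∈ D (x j), v j = G (x j) *ᵥ d + Δ j)
    (hΔ : Tendsto (fun j => ‖Δ j‖) atTop (𝓝 0))
    (hlimconv : Convex ℝ ((fun d => G xbar *ᵥ d) '' D xbar)) :
    Tendsto (fun N : ℕ => Metric.infDist ((N:ℝ)⁻¹ • ∑ j ∈ Finset.range N, v j)
      ((fun d => G xbar *ᵥ d) '' D xbar)) atTop (𝓝 0) := by
  classical
  choose d hd hveq using hv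
  set S : Set (Fin n → ℝ) := (fun d => G xbar *ᵥ d) '' D xbar with hS
  have hmvcont : Continuous fun w : Fin n → ℝ => G xbar *ᵥ w :=
    (continuous_const.matrix_mulVec continuous_id)
  have hScomp : IsCompact S := (hcomp xbar).image hmvcont
  have hSne : S.Nonempty := (hne xbar).image _
  -- Step 1: infDist (v j) S → 0
  have key : Tendsto (fun j => Metric.infDist (v j) S) atTop (𝓝 0) := by
    apply tendsto_of_subseq_tendsto
    intro ns hns
    obtain ⟨r, hr, M, hM⟩ := hloc xbar
    obtain ⟨J, hJ⟩ := eventually_atTop.mp (hx.eventually (Metric.eventually_nhds_iff_ball.mpr ⟨r, hr, fun y hy => hy⟩))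
    obtain ⟨K, hK⟩ := eventually_atTop.mp (hns.eventually (eventually_ge_atTop J))
    have hmem : ∀ k, d (ns (k + K)) ∈ Metric.closedBall (0 : Fin n → ℝ) M := by
      intro k
      have h1 : J ≤ ns (k + K) := hK _ (Nat.le_add_left K k)
      have h2 : x (ns (k + K)) ∈ Metric.ball xbar r := hJ _ h1
      simpa [Metric.mem_closedBall, dist_zero_right] using
        hM _ h2 _ (hd (ns (k + K)))
    obtain ⟨dbar, _hdbar, φ, hφ, hφtend⟩ :=
      (isCompact_closedBall (0 : Fin n → ℝ) M).tendsto_subseq hmem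
    set ms : ℕ → ℕ := fun k => φ k + K with hms
    have hmstend : Tendsto (fun k => ns (ms k)) atTop atTop :=
      hns.comp (tendsto_atTop_mono (fun k => Nat.le_add_right (φ k) K) hφ.tendsto_atTop)
    have hxk : Tendsto (fun k => x (ns (ms k))) atTop (𝓝 xbar) := hx.comp hmstend
    have hdk : Tendsto (fun k => d (ns (ms k))) atTop (𝓝 dbar) := hφtend
    have hdbarD : dbar ∈ D xbar :=
      hosc _ _ _ _ (fun k => hd (ns (ms k))) hxk hdk
    have hΔk : Tendsto (fun k => Δ (ns (ms k))) atTop (𝓝 0) := by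
      rw [tendsto_zero_iff_norm_tendsto_zero]
      exact hΔ.comp hmstend
    have hvk : Tendsto (fun k => v (ns (ms k))) atTop (𝓝 (G xbar *ᵥ dbar)) := by
      have hpair : Continuous fun p : Matrix (Fin n) (Fin n) ℝ × (Fin n → ℝ) =>
          p.1 *ᵥ p.2 := (continuous_fst.matrix_mulVec continuous_snd)
      have h1 : Tendsto (fun k => G (x (ns (ms k))) *ᵥ d (ns (ms k))) atTop
          (𝓝 (G xbar *ᵥ dbar)) :=
        hpair.continuousAt.tendsto.comp
          ((hG.continuousAt.tendsto.comp hxk).prodMk_nhds hdk)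
      have := h1.add hΔk
      rw [add_zero] at this
      refine this.congr fun k => ?_
      exact (hveq (ns (ms k))).symm
    refine ⟨ms, ?_⟩
    have hzero : Metric.infDist (G xbar *ᵥ dbar) S = 0 :=
      Metric.infDist_zero_of_mem ⟨dbar, hdbarD, rfl⟩
    have := (Metric.continuous_infDist_pt S).continuousAt.tendsto.comp hvk
    rwa [hzero] at this
  -- Step 2: pick closest points and average
  have hproj : ∀ j, ∃ s ∈ S, Metric.infDist (v j) S = dist (v j) s := fun j =>
    hScomp.exists_infDist_eq_dist hSne (v j)
  choose s hsS hsdist using hproj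
  have hbound : ∀ N : ℕ, 1 ≤ N →
      Metric.infDist ((N:ℝ)⁻¹ • ∑ j ∈ Finset.range N, v j) S ≤
        (N:ℝ)⁻¹ * ∑ j ∈ Finset.range N, Metric.infDist (v j) S := by
    intro N hN
    have hNpos : (0:ℝ) < N := by exact_mod_cast hN
    have havg : (N:ℝ)⁻¹ • ∑ j ∈ Finset.range N, s j ∈ S := by
      have := hlimconv.sum_mem (t := Finset.range N) (w := fun _ => (N:ℝ)⁻¹)
        (fun i _ => by positivity)
        (by simp [Finset.sum_const, mul_inv_cancel₀ hNpos.ne'])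
        (fun i hi => hsS i)
      simpa [Finset.smul_sum] using this
    calc Metric.infDist ((N:ℝ)⁻¹ • ∑ j ∈ Finset.range N, v j) S
        ≤ dist ((N:ℝ)⁻¹ • ∑ j ∈ Finset.range N, v j)
            ((N:ℝ)⁻¹ • ∑ j ∈ Finset.range N, s j) := Metric.infDist_le_dist_of_mem havg
      _ = ‖(N:ℝ)⁻¹‖ * dist (∑ j ∈ Finset.range N, v j) (∑ j ∈ Finset.range N, s j) := by
          rw [dist_smul₀]
      _ ≤ (N:ℝ)⁻¹ * ∑ j ∈ Finset.range N, dist (v j) (s j) := by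
          have h1 : ‖(N:ℝ)⁻¹‖ = (N:ℝ)⁻¹ := by
            rw [Real.norm_eq_abs, abs_of_nonneg (by positivity)]
          rw [h1]
          exact mul_le_mul_of_nonneg_left
            (dist_sum_sum_le_of_le _ fun j _ => le_refl (dist (v j) (s j)))
            (by positivity)
      _ = (N:ℝ)⁻¹ * ∑ j ∈ Finset.range N, Metric.infDist (v j) S := by
          simp_rw [hsdist]
  have hces : Tendsto (fun N : ℕ => (N:ℝ)⁻¹ * ∑ j ∈ Finset.range N, Metric.infDist (v j) S)
      atTop (𝓝 0) := key.cesaro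
  refine squeeze_zero' (Eventually.of_forall fun N => Metric.infDist_nonneg) ?_ hces
  filter_upwards [eventually_ge_atTop 1] with N hN
  exact hbound N hN
end

section
/- Let f : ℝⁿ → ℝ be path-differentiable, φ a C² Legendre function with ∇²φ(x) ⪰ μI on C (μ > 0), and let z : [0,∞) → 𝓜 ∩ C be an absolutely continuous solution of the differential inclusion (d/dt)∇φ(z(t)) ∈ -∂f(z(t)) + N_{z(t)}𝓜 with ż(t) ∈ T_{z(t)}𝓜 a.e. Then for all t ≥ 0: f(z(t)) - f(z(0)) = -∫₀ᵗ ⟨∇²φ(z(s))ż(s), ż(s)⟩ ds ≤ -μ∫₀ᵗ‖ż(s)‖² ds ≤ 0. Moreover, if f(z(t)) = f(z(0)) for all t ≥ 0, then z is constant and 0 ∈ P_{T_{z(0)}𝓜}(∇²φ(z(0))⁻¹∂f(z(0))). -/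
open Matrix Filter Topology MeasureTheory intervalIntegral

/-!
For a.e. `t > 0` the curve is differentiable and the chain rule gives
`(d/dt)∇φ(z) = ∇²φ(z) ż`. Comparing with `-d + w` from the inclusion, where `w ⊥ T ∋ ż`, yields
`⟨d, ż⟩ = -⟨∇²φ(z) ż, ż⟩`, so path-differentiability writes `f ∘ z` as the integral of
`-⟨∇²φ(z) ż, ż⟩ ≤ -μ‖ż‖²`. If `f ∘ z` is constant then `∫‖ż‖² = 0`, so `z` is constant,
`∇φ(z)` has derivative zero and the subgradient `d` equals the normal vector `w`. Finally, with
`H = ∇²φ(z 0)` positive definite, `d ⊥ T` says that `0` is the `H`-orthogonal projection of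
`H⁻¹ d` onto `T`, i.e. the nearest point of `T` to `H⁻¹ d` in the `H`-norm.
-/

theorem ae_hasDerivAt_of_eq_add_integral {E : Type*} [NormedAddCommGroup E] [NormedSpace ℝ E]
    [CompleteSpace E] {z z' : ℝ → E}
    (hz : ∀ t : ℝ, 0 ≤ t → IntervalIntegrable z' volume 0 t ∧
      z t = z 0 + ∫ s in (0:ℝ)..t, z' s) :
    ∀ᵐ t : ℝ, 0 < t → HasDerivAt z (z' t) t := by
  have hN (N : ℕ) := (hz N N.cast_nonneg).1.ae_hasDerivAt_integral
  filter_upwards [ae_all_iff.2 hN] with t ht htpos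
  have hderiv := ht ⌈t⌉₊ (by simp [Set.uIcc_of_le, htpos.le, Nat.le_ceil]) 0 (by simp)
  refine (hderiv.const_add (z 0)).congr_of_eventuallyEq ?_
  filter_upwards [Ioi_mem_nhds htpos] with s hs using (hz s (le_of_lt hs)).2

theorem exists_pos_of_ae_nonneg_imp {P : ℝ → Prop} (h : ∀ᵐ t : ℝ, 0 ≤ t → P t) :
    ∃ t > 0, P t := by
  have : (ae (volume.restrict (Set.Ioi (0:ℝ)))).NeBot := ae_neBot.2 (by simp)
  obtain ⟨t, ht, hP⟩ :=
    ((ae_restrict_mem (measurableSet_Ioi (a := (0:ℝ)))).and (ae_restrict_of_ae h)).exists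
  exact ⟨t, ht, hP (le_of_lt ht)⟩

theorem sub_eq_intervalIntegral_of_ae_eq {F g h : ℝ → ℝ} {t : ℝ} (ht : 0 ≤ t)
    (hF : F t = F 0 + ∫ s in (0:ℝ)..t, g s) (hgh : ∀ᵐ s : ℝ, 0 < s → g s = h s) :
    F t - F 0 = ∫ s in (0:ℝ)..t, h s := by
  rw [hF, add_sub_cancel_left]
  refine intervalIntegral.integral_congr_ae ?_
  filter_upwards [hgh] with s hs hmem
  exact hs (Set.uIoc_of_le ht ▸ hmem).1

theorem intervalIntegral_eq_zero_of_integral_dotProduct_self_eq_zero {ι : Type*} [Fintype ι]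
    {v : ℝ → ι → ℝ} {t : ℝ} (ht : 0 ≤ t)
    (hint : IntervalIntegrable (fun s => v s ⬝ᵥ v s) volume 0 t)
    (h0 : ∫ s in (0:ℝ)..t, v s ⬝ᵥ v s = 0) : ∫ s in (0:ℝ)..t, v s = 0 := by
  rw [intervalIntegral.integral_of_le ht] at h0 ⊢
  have hsq := (integral_eq_zero_iff_of_nonneg
    (fun s => dotProduct_self_star_nonneg (v s)) hint.1).1 h0
  exact integral_eq_zero_of_ae (hsq.mono fun s hs => dotProduct_self_eq_zero.1 hs)

theorem exists_mem_orthogonal_of_const {ι : Type*} [Fintype ι] {Φ : (ι → ℝ) → ι → ℝ}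
    {D : (ι → ℝ) → Set (ι → ℝ)} {T : (ι → ℝ) → Submodule ℝ (ι → ℝ)} {z : ℝ → ι → ℝ}
    (hconst : ∀ t, 0 ≤ t → z t = z 0)
    (hDI : ∀ᵐ t : ℝ, 0 ≤ t → ∃ d ∈ D (z t), ∃ w : ι → ℝ,
      (∀ u ∈ T (z t), w ⬝ᵥ u = 0) ∧ HasDerivAt (fun s => Φ (z s)) (-d + w) t) :
    ∃ d ∈ D (z 0), ∀ u ∈ T (z 0), d ⬝ᵥ u = 0 := by
  obtain ⟨t₀, ht₀, d, hd, w, hwT, hderiv⟩ := exists_pos_of_ae_nonneg_imp hDI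
  have hderiv_zero : HasDerivAt (fun s => Φ (z s)) 0 t₀ := by
    refine (hasDerivAt_const t₀ (Φ (z 0))).congr_of_eventuallyEq ?_
    filter_upwards [Ioi_mem_nhds ht₀] with s hs
    rw [hconst s hs.le]
  have hdw : d = w := neg_add_eq_zero.1 (hderiv.unique hderiv_zero)
  rw [hconst t₀ ht₀.le] at hd hwT
  exact ⟨d, hd, hdw ▸ hwT⟩

namespace Matrix

variable {ι : Type*} [Fintype ι]

theorem posDef_of_coercive {H : Matrix ι ι ℝ} (hH : H.IsHermitian) {μ : ℝ} (hμ : 0 < μ)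
    (hcoer : ∀ w, μ * (w ⬝ᵥ w) ≤ (H *ᵥ w) ⬝ᵥ w) : H.PosDef := by
  refine posDef_iff_dotProduct_mulVec.2 ⟨hH, fun w hw => ?_⟩
  have hpos : 0 < w ⬝ᵥ w := dotProduct_self_star_pos_iff.mpr hw
  rw [star_trivial, dotProduct_comm]
  exact (mul_pos hμ hpos).trans_le (hcoer w)

theorem PosDef.dotProduct_mulVec_inv_le [DecidableEq ι] {H : Matrix ι ι ℝ} (hH : H.PosDef)
    {d p : ι → ℝ} (hdp : d ⬝ᵥ p = 0) :
    (H *ᵥ (H⁻¹ *ᵥ d)) ⬝ᵥ (H⁻¹ *ᵥ d) ≤ (H *ᵥ (p - H⁻¹ *ᵥ d)) ⬝ᵥ (p - H⁻¹ *ᵥ d) := by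
  set q := H⁻¹ *ᵥ d
  have hHq : H *ᵥ q = d := by
    rw [mulVec_mulVec, mul_nonsing_inv _ ((isUnit_iff_isUnit_det H).mp hH.isUnit), one_mulVec]
  have hqp : (H *ᵥ q) ⬝ᵥ p = 0 := by rw [hHq, hdp]
  have hpq : (H *ᵥ p) ⬝ᵥ q = 0 := by
    rw [dotProduct_comm, dotProduct_mulVec, ← mulVec_transpose,
      ← conjTranspose_eq_transpose_of_trivial, hH.isHermitian.eq, hqp]
  have hpp : 0 ≤ (H *ᵥ p) ⬝ᵥ p := by
    simpa [dotProduct_comm] using hH.posSemidef.dotProduct_mulVec_nonneg p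
  have hexpand : (H *ᵥ (p - q)) ⬝ᵥ (p - q) =
      (H *ᵥ p) ⬝ᵥ p - (H *ᵥ p) ⬝ᵥ q - (H *ᵥ q) ⬝ᵥ p + (H *ᵥ q) ⬝ᵥ q := by
    simp only [mulVec_sub, sub_dotProduct, dotProduct_sub]
    ring
  linarith

end Matrix

section Hessian

variable {n : ℕ} {φ : (Fin n → ℝ) → ℝ}

theorem hessMat_eq_toMatrix₂' (x : Fin n → ℝ) :
    hessMat φ x = LinearMap.toMatrix₂' ℝ (fderiv ℝ (fderiv ℝ φ) x).toLinearMap₁₂ := by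
  ext i j
  simp [hessMat, iteratedFDeriv_two_apply]

theorem dotProduct_hessMat_mulVec (x v w : Fin n → ℝ) :
    w ⬝ᵥ (hessMat φ x *ᵥ v) = fderiv ℝ (fderiv ℝ φ) x w v := by
  rw [hessMat_eq_toMatrix₂', ← Matrix.toLinearMap₂'_apply', Matrix.toLinearMap₂'_toMatrix']
  rfl

theorem hessMat_mulVec_apply (x v : Fin n → ℝ) (i : Fin n) :
    (hessMat φ x *ᵥ v) i = fderiv ℝ (fderiv ℝ φ) x (Pi.single i 1) v := by
  rw [← dotProduct_hessMat_mulVec, single_one_dotProduct]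

theorem isHermitian_hessMat {x : Fin n → ℝ} (hφ : ContDiffAt ℝ 2 φ x) :
    (hessMat φ x).IsHermitian := by
  ext i j
  simp [hessMat_eq_toMatrix₂', (hφ.isSymmSndFDerivAt (by simp)).eq (Pi.single i 1)]

theorem hasDerivAt_gradVec_comp {z : ℝ → Fin n → ℝ} {v : Fin n → ℝ} {t : ℝ}
    (hφ : ContDiffAt ℝ 2 φ (z t)) (hz : HasDerivAt z v t) :
    HasDerivAt (fun s => gradVec φ (z s)) (hessMat φ (z t) *ᵥ v) t := by
  have hB : HasFDerivAt (fderiv ℝ φ) (fderiv ℝ (fderiv ℝ φ) (z t)) (z t) :=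
    ((hφ.fderiv_right (m := 1) le_rfl).differentiableAt one_ne_zero).hasFDerivAt
  have hcoord : HasDerivAt (fun s => fderiv ℝ φ (z s)) (fderiv ℝ (fderiv ℝ φ) (z t) v) t :=
    hB.comp_hasDerivAt t hz
  rw [hasDerivAt_pi]
  intro i
  rw [hessMat_mulVec_apply, (hφ.isSymmSndFDerivAt (by simp)).eq]
  exact (ContinuousLinearMap.apply ℝ ℝ (Pi.single i 1)).hasFDerivAt.comp_hasDerivAt t hcoord

theorem dotProduct_eq_neg_hessMat_of_hasDerivAt_gradVec {z : ℝ → Fin n → ℝ} {t : ℝ}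
    {v d w : Fin n → ℝ} (hφ : ContDiffAt ℝ 2 φ (z t))
    (hz : HasDerivAt z v t) (hgrad : HasDerivAt (fun s => gradVec φ (z s)) (-d + w) t)
    (hwv : w ⬝ᵥ v = 0) :
    d ⬝ᵥ v = -((hessMat φ (z t) *ᵥ v) ⬝ᵥ v) := by
  have hd : d = w - hessMat φ (z t) *ᵥ v := by
    rw [← hgrad.unique (hasDerivAt_gradVec_comp hφ hz)]; abel
  rw [hd, sub_dotProduct, hwv, zero_sub]

end Hessian

/-- Along a solution `z` of `(d/dt)∇φ(z(t)) ∈ -∂f(z(t)) + N_{z(t)}𝓜` with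
`ż(t) ∈ T_{z(t)}𝓜` a.e. and `∇²φ ⪰ μI` on `C`, one has
`f(z(t)) - f(z(0)) = -∫₀ᵗ ⟨∇²φ(z)ż, ż⟩ ≤ -μ∫₀ᵗ‖ż‖² ≤ 0`; and if `f∘z` is constant
then `z` is constant and `0 ∈ P_{T_{z(0)}𝓜}(∇²φ(z(0))⁻¹ ∂f(z(0)))`. -/
theorem stmt15 {n : ℕ} (C Mset : Set (Fin n → ℝ)) (hCopen : IsOpen C)
    (φ : (Fin n → ℝ) → ℝ) (hφ : ContDiffOn ℝ 2 φ C) (μ : ℝ) (hμ : 0 < μ)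
    (hlower : ∀ x ∈ C, ∀ w : Fin n → ℝ, μ * (w ⬝ᵥ w) ≤ (hessMat φ x *ᵥ w) ⬝ᵥ w)
    (f : (Fin n → ℝ) → ℝ) (D : (Fin n → ℝ) → Set (Fin n → ℝ))
    (T : (Fin n → ℝ) → Submodule ℝ (Fin n → ℝ))
    (z z' : ℝ → Fin n → ℝ)
    (hzmem : ∀ t : ℝ, 0 ≤ t → z t ∈ Mset ∩ C)
    (hzint : ∀ t : ℝ, 0 ≤ t → IntervalIntegrable z' volume 0 t ∧
      z t = z 0 + ∫ s in (0:ℝ)..t, z' s)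
    (htan : ∀ᵐ t : ℝ, 0 ≤ t → z' t ∈ T (z t))
    (hDI : ∀ᵐ t : ℝ, 0 ≤ t → ∃ d ∈ D (z t), ∃ w : Fin n → ℝ,
      (∀ u ∈ T (z t), w ⬝ᵥ u = 0) ∧
      HasDerivAt (fun s => gradVec φ (z s)) (-d + w) t)
    -- path-differentiability of `f` along the curve `z`:
    (hpath : ∃ g : ℝ → ℝ, (∀ᵐ s : ℝ, 0 ≤ s → ∀ d ∈ D (z s), g s = d ⬝ᵥ z' s) ∧
      ∀ t : ℝ, 0 ≤ t → IntervalIntegrable g volume 0 t ∧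
        f (z t) = f (z 0) + ∫ s in (0:ℝ)..t, g s)
    (hint1 : ∀ t : ℝ, 0 ≤ t →
      IntervalIntegrable (fun s => (hessMat φ (z s) *ᵥ z' s) ⬝ᵥ z' s) volume 0 t)
    (hint2 : ∀ t : ℝ, 0 ≤ t →
      IntervalIntegrable (fun s => z' s ⬝ᵥ z' s) volume 0 t) :
    (∀ t : ℝ, 0 ≤ t →
      f (z t) - f (z 0) = -∫ s in (0:ℝ)..t, (hessMat φ (z s) *ᵥ z' s) ⬝ᵥ z' s ∧
      (-∫ s in (0:ℝ)..t, (hessMat φ (z s) *ᵥ z' s) ⬝ᵥ z' s) ≤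
        -μ * ∫ s in (0:ℝ)..t, z' s ⬝ᵥ z' s ∧
      (-μ * ∫ s in (0:ℝ)..t, z' s ⬝ᵥ z' s) ≤ 0) ∧
    ((∀ t : ℝ, 0 ≤ t → f (z t) = f (z 0)) →
      (∀ t : ℝ, 0 ≤ t → z t = z 0) ∧
      ∃ d ∈ D (z 0), ∀ p ∈ T (z 0),
        (hessMat φ (z 0) *ᵥ ((hessMat φ (z 0))⁻¹ *ᵥ d)) ⬝ᵥ
            ((hessMat φ (z 0))⁻¹ *ᵥ d) ≤
        (hessMat φ (z 0) *ᵥ (p - (hessMat φ (z 0))⁻¹ *ᵥ d)) ⬝ᵥ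
            (p - (hessMat φ (z 0))⁻¹ *ᵥ d)) := by
  obtain ⟨g, hg, hfg⟩ := hpath
  have hφz : ∀ t, 0 ≤ t → ContDiffAt ℝ 2 φ (z t) := fun t ht =>
    hφ.contDiffAt (hCopen.mem_nhds (hzmem t ht).2)
  have hg_eq : ∀ᵐ s : ℝ, 0 < s → g s = -((hessMat φ (z s) *ᵥ z' s) ⬝ᵥ z' s) := by
    filter_upwards [ae_hasDerivAt_of_eq_add_integral hzint, hDI, hg, htan]
      with s hzs hDIs hgs htans hs
    obtain ⟨d, hd, w, hwT, hgrad⟩ := hDIs hs.le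
    rw [hgs hs.le d hd]
    exact dotProduct_eq_neg_hessMat_of_hasDerivAt_gradVec (hφz s hs.le) (hzs hs) hgrad
      (hwT _ (htans hs.le))
  have hdecrease : ∀ t, 0 ≤ t →
      f (z t) - f (z 0) = -∫ s in (0:ℝ)..t, (hessMat φ (z s) *ᵥ z' s) ⬝ᵥ z' s := fun t ht => by
    rw [← intervalIntegral.integral_neg]
    exact sub_eq_intervalIntegral_of_ae_eq (F := fun s => f (z s)) ht (hfg t ht).2 hg_eq
  have hcoer : ∀ t, 0 ≤ t → μ * ∫ s in (0:ℝ)..t, z' s ⬝ᵥ z' s ≤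
      ∫ s in (0:ℝ)..t, (hessMat φ (z s) *ᵥ z' s) ⬝ᵥ z' s := fun t ht => by
    rw [← intervalIntegral.integral_const_mul]
    exact intervalIntegral.integral_mono_on ht ((hint2 t ht).const_mul μ) (hint1 t ht)
      fun s hs => hlower _ (hzmem s hs.1).2 _
  have hsq : ∀ t, 0 ≤ t → 0 ≤ ∫ s in (0:ℝ)..t, z' s ⬝ᵥ z' s := fun t ht =>
    intervalIntegral.integral_nonneg ht fun s _ => dotProduct_self_star_nonneg (z' s)
  refine ⟨fun t ht => ⟨hdecrease t ht, by linarith [hcoer t ht], by nlinarith [hsq t ht]⟩,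
    fun hconst => ?_⟩
  have hz_const : ∀ t, 0 ≤ t → z t = z 0 := by
    intro t ht
    have h0 : ∫ s in (0:ℝ)..t, z' s ⬝ᵥ z' s = 0 := by
      have := hdecrease t ht
      rw [hconst t ht, sub_self] at this
      nlinarith [hcoer t ht, hsq t ht]
    rw [(hzint t ht).2,
      intervalIntegral_eq_zero_of_integral_dotProduct_self_eq_zero ht (hint2 t ht) h0, add_zero]
  obtain ⟨d, hd, hdT⟩ := exists_mem_orthogonal_of_const hz_const hDI
  have hH := Matrix.posDef_of_coercive (isHermitian_hessMat (hφz 0 le_rfl)) hμ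
    (hlower _ (hzmem 0 le_rfl).2)
  exact ⟨hz_const, d, hd, fun p hp => hH.dotProduct_mulVec_inv_le (hdT p hp)⟩
end

section
/- Let C = {x ∈ ℝⁿ : g(x) ≤ 0} with g C¹, 𝓜 = {x : c(x) = 0} with c C¹, and assume at x̄ the condition N_{C}(x̄) ∩ N_{x̄}𝓜 = {0}, where N_C(x̄) = {∇g_𝒥(x̄)λ : λ ≥ 0} (𝒥 active indices) and N_{x̄}𝓜 = Range(∇c(x̄)). Suppose sequences ν_k → ν̄ with ‖ν̄‖ = 1, ν̄ ∈ N_C(x̄), Γ_k ≥ 0, and Γ_kν_k + G_k ∈ N_{x̄}𝓜 with G_k → G̃ ∈ ∂f(x̄) (closed sets). Then {Γ_k} cannot diverge to +∞; hence along a subsequence Γ_k → Γ̄ < ∞ and Γ̄ν̄ ∈ -∂f(x̄) + N_{x̄}𝓜, i.e., 0 ∈ ∂f(x̄) + N_{x̄}𝓜 + N_C(x̄). -/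
open Matrix Filter Topology

/-- Under `N_C(x̄) ∩ N_{x̄}𝓜 = {0}` (MFCQ), if `ν_k → ν̄` with `‖ν̄‖ = 1`,
`ν̄ ∈ N_C(x̄)`, `Γ_k ≥ 0`, `Γ_kν_k + G_k ∈ N_{x̄}𝓜` with `G_k → G̃ ∈ ∂f(x̄)`, then `Γ_k`
cannot diverge to `+∞`; along a subsequence `Γ_k → Γ̄ < ∞`, and
`0 ∈ ∂f(x̄) + N_{x̄}𝓜 + N_C(x̄)`. -/
theorem stmt17 {n m k : ℕ}
    (c : (Fin n → ℝ) → Fin m → ℝ) (hc : ContDiff ℝ 1 c)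
    (g : (Fin n → ℝ) → Fin k → ℝ) (hg : ContDiff ℝ 1 g)
    (xbar : Fin n → ℝ) (J : Set (Fin k)) (hJ : ∀ j ∈ J, g xbar j = 0)
    (Dfx : Set (Fin n → ℝ)) (hDcomp : IsCompact Dfx) (hDne : Dfx.Nonempty)
    (hMFCQ : ∀ w : Fin n → ℝ,
      w ∈ {w | ∃ lam : Fin k → ℝ, (∀ j, 0 ≤ lam j) ∧ (∀ j, j ∉ J → lam j = 0) ∧
        w = ∑ j, lam j • gradVec (fun y => g y j) xbar} →
      w ∈ {w | ∃ μ : Fin m → ℝ, w = ∑ i, μ i • gradVec (fun y => c y i) xbar} →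
      w = 0)
    (ν : ℕ → Fin n → ℝ) (νbar : Fin n → ℝ)
    (hν : Tendsto ν atTop (𝓝 νbar)) (hνnorm : νbar ⬝ᵥ νbar = 1)
    (hνNC : ∃ lam : Fin k → ℝ, (∀ j, 0 ≤ lam j) ∧ (∀ j, j ∉ J → lam j = 0) ∧
      νbar = ∑ j, lam j • gradVec (fun y => g y j) xbar)
    (Γ : ℕ → ℝ) (hΓ : ∀ i, 0 ≤ Γ i)
    (G : ℕ → Fin n → ℝ) (Gtil : Fin n → ℝ)
    (hGmem : ∀ i, ∃ μ : Fin m → ℝ,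
      Γ i • ν i + G i = ∑ l, μ l • gradVec (fun y => c y l) xbar)
    (hGlim : Tendsto G atTop (𝓝 Gtil)) (hGtil : Gtil ∈ Dfx) :
    ¬ Tendsto Γ atTop atTop ∧
    ∃ (Γbar : ℝ) (sub : ℕ → ℕ), 0 ≤ Γbar ∧ StrictMono sub ∧
      Tendsto (fun i => Γ (sub i)) atTop (𝓝 Γbar) ∧
      (∃ μ : Fin m → ℝ,
        Γbar • νbar + Gtil = ∑ l, μ l • gradVec (fun y => c y l) xbar) ∧
      (∃ w ∈ {w : Fin n → ℝ | ∃ μ : Fin m → ℝ,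
          w = ∑ l, μ l • gradVec (fun y => c y l) xbar},
        ∃ q ∈ {w : Fin n → ℝ | ∃ lam : Fin k → ℝ, (∀ j, 0 ≤ lam j) ∧
          (∀ j, j ∉ J → lam j = 0) ∧
          w = ∑ j, lam j • gradVec (fun y => g y j) xbar},
        Gtil + w + q = 0) := by
  classical
  set v : Fin m → (Fin n → ℝ) := fun l => gradVec (fun y => c y l) xbar with hv
  set W : Submodule ℝ (Fin n → ℝ) := Submodule.span ℝ (Set.range v) with hWdef
  have hWclosed : IsClosed (W : Set (Fin n → ℝ)) := Submodule.closed_of_finiteDimensional W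
  have hmemW : ∀ x : Fin n → ℝ, (∃ μ : Fin m → ℝ, x = ∑ l, μ l • v l) ↔ x ∈ W := by
    intro x
    rw [hWdef, Submodule.mem_span_range_iff_exists_fun]
    constructor
    · rintro ⟨μ, hμ⟩; exact ⟨μ, hμ.symm⟩
    · rintro ⟨μ, hμ⟩; exact ⟨μ, hμ.symm⟩
  -- Γ is bounded
  have hbdd : ∃ B : ℝ, ∀ i, Γ i ≤ B := by
    by_contra hB
    push_neg at hB
    have hfreq : ∀ N : ℕ, ∃ᶠ i in atTop, (N : ℝ) < Γ i := by
      intro N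
      rw [Filter.frequently_atTop]
      intro a
      obtain ⟨i, hi⟩ := hB (max (N : ℝ) ((Finset.range (a + 1)).sup' (by simp) Γ))
      refine ⟨i, ?_, lt_of_le_of_lt (le_max_left _ _) hi⟩
      by_contra hia
      push_neg at hia
      exact absurd (Finset.le_sup' Γ (Finset.mem_range.mpr (by omega)))
        (not_le.mpr (lt_of_le_of_lt (le_max_right _ _) hi))
    obtain ⟨φ, hφmono, hφ⟩ := Filter.extraction_forall_of_frequently hfreq
    have hΓφ : Tendsto (fun i => Γ (φ i)) atTop atTop :=
      tendsto_atTop_mono (fun i => (hφ i).le) tendsto_natCast_atTop_atTop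
    have hinv : Tendsto (fun i => (Γ (φ i))⁻¹) atTop (𝓝 0) := hΓφ.inv_tendsto_atTop
    have htend : Tendsto (fun i => ν (φ i) + (Γ (φ i))⁻¹ • G (φ i)) atTop (𝓝 νbar) := by
      have h1 : Tendsto (fun i => (Γ (φ i))⁻¹ • G (φ i)) atTop (𝓝 ((0 : ℝ) • Gtil)) :=
        hinv.smul (hGlim.comp hφmono.tendsto_atTop)
      rw [zero_smul] at h1
      have := (hν.comp hφmono.tendsto_atTop).add h1
      simpa using this
    have hmem : ∀ᶠ i in atTop, ν (φ i) + (Γ (φ i))⁻¹ • G (φ i) ∈ (W : Set (Fin n → ℝ)) := by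
      filter_upwards [eventually_ge_atTop 1] with i hi
      have hpos : (0 : ℝ) < Γ (φ i) := lt_of_lt_of_le (by exact_mod_cast hi) (hφ i).le
      obtain ⟨μ, hμ⟩ := hGmem (φ i)
      have hx : Γ (φ i) • ν (φ i) + G (φ i) ∈ W := (hmemW _).mp ⟨μ, hμ⟩
      have := W.smul_mem (Γ (φ i))⁻¹ hx
      rwa [smul_add, smul_smul, inv_mul_cancel₀ hpos.ne', one_smul] at this
    have hνW : νbar ∈ W := hWclosed.mem_of_tendsto htend hmem
    have h0 : νbar = 0 := hMFCQ νbar hνNC ((hmemW νbar).mpr hνW)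
    rw [h0] at hνnorm
    simp [dotProduct] at hνnorm
  obtain ⟨B, hBle⟩ := hbdd
  have hnot : ¬ Tendsto Γ atTop atTop := by
    intro h
    obtain ⟨i, hi⟩ := (h.eventually (eventually_ge_atTop (B + 1))).exists
    linarith [hBle i]
  -- Bolzano–Weierstrass
  have hIcc : ∀ i, Γ i ∈ Set.Icc (0 : ℝ) B := fun i => ⟨hΓ i, hBle i⟩
  obtain ⟨Γbar, hΓbarmem, sub, hsubmono, hsubtend⟩ :=
    (isCompact_Icc (a := (0:ℝ)) (b := B)).tendsto_subseq hIcc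
  refine ⟨hnot, Γbar, sub, hΓbarmem.1, hsubmono, hsubtend, ?_⟩
  have hlimW : Γbar • νbar + Gtil ∈ W := by
    refine hWclosed.mem_of_tendsto
      ((hsubtend.smul (hν.comp hsubmono.tendsto_atTop)).add (hGlim.comp hsubmono.tendsto_atTop))
      (Eventually.of_forall fun i => ?_)
    obtain ⟨μ, hμ⟩ := hGmem (sub i)
    exact (hmemW _).mp ⟨μ, hμ⟩
  obtain ⟨μ, hμ⟩ := (hmemW _).mpr hlimW
  refine ⟨⟨μ, hμ⟩, ∑ l, (-μ l) • v l, ⟨fun l => -μ l, rfl⟩, Γbar • νbar, ?_, ?_⟩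
  · obtain ⟨lam, hlam0, hlamJ, hlameq⟩ := hνNC
    refine ⟨fun j => Γbar * lam j, fun j => mul_nonneg hΓbarmem.1 (hlam0 j),
      fun j hj => by simp [hlamJ j hj], ?_⟩
    rw [hlameq, Finset.smul_sum]
    exact Finset.sum_congr rfl fun j _ => by rw [smul_smul]
  · have : ∑ l, (-μ l) • v l = -(Γbar • νbar + Gtil) := by
      rw [hμ]
      simp [Finset.sum_neg_distrib, neg_smul]
    rw [this]
    abel
end
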